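/- Let T_r^min denote the set of lines in ℝ^d with rational direction (direction z/|z| for some nonzero z ∈ ℤ^d) containing at least two lattice points of B_r ∩ ℤ^d. Then #T_r^min = Θ(r^{2d}) as r → ∞; i.e., there exist C_1, C_2 > 0 with C_1 r^{2d} < #T_r^min < C_2 r^{2d} for large r. -/

import Mathlib

open RealInnerProductSpace

noncomputable def L (d : ℕ) (z : Fin d → ℤ) : EuclideanSpace ℝ (Fin d) := WithLp.toLp 2 (fun i => (z i : ℝ))

def Tmin (d : ℕ) (r : ℝ) : Set (Set (EuclideanSpace ℝ (Fin d))) :=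
  {s | ∃ (x : EuclideanSpace ℝ (Fin d)) (z : Fin d → ℤ), z ≠ 0 ∧
        s = {y | ∃ t : ℝ, y = x + t • L d z} ∧
        ∃ y y' : Fin d → ℤ, y ≠ y' ∧ L d y ∈ s ∧ L d y' ∈ s ∧ ‖L d y‖ ≤ r ∧ ‖L d y'‖ ≤ r}

/-! Upper bound: a line of `Tmin d r` is the line through two distinct lattice points of the box
`[-⌊r⌋, ⌊r⌋]^d`, so there are at most `(2r + 1)^(2d)` of them.

Lower bound: take `n ≈ r / (6d)`, base points `y ∈ [0, n)^d` and directions `z = (a, b, w)` with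
`a, b` coprime, `n < a ≤ 5n`, `0 < b ≤ 5n`, `w ∈ [0, n)^(d-2)`. Since `∑_{k ≥ 2} k⁻² < 3/4`, at
least a quarter of the pairs in `(0, N]²` are coprime, which gives `≥ n^d` such directions. Such a
`z` is primitive, so consecutive lattice points of the line `y + ℝz` differ by `z`, whose first
coordinate exceeds `n`; hence `y` is the only point of that line in `[0, n)^d`, and the `≥ n^(2d)`
lines obtained this way are distinct. -/

open Finset

lemma sum_Icc_two_inv_sq_le (N : ℕ) : ∑ k ∈ Icc 2 N, ((k : ℝ) ^ 2)⁻¹ ≤ 3 / 4 := by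
  have telescoped (N : ℕ) :
      ∑ k ∈ Icc 2 (N + 2), ((k : ℝ) ^ 2)⁻¹ ≤ 3 / 4 - ((N : ℝ) + 2)⁻¹ := by
    induction N with
    | zero => norm_num
    | succ N ih =>
      rw [show N + 1 + 2 = N + 2 + 1 by ring, sum_Icc_succ_top (by omega)]
      have step : (((N : ℝ) + 3) ^ 2)⁻¹ ≤ ((N : ℝ) + 2)⁻¹ - ((N : ℝ) + 3)⁻¹ := by
        rw [show ((N : ℝ) + 2)⁻¹ - ((N : ℝ) + 3)⁻¹ = (((N : ℝ) + 2) * ((N : ℝ) + 3))⁻¹ by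
          field_simp; ring]
        exact inv_anti₀ (by positivity) (by nlinarith)
      push_cast at ih ⊢
      ring_nf at ih step ⊢
      linarith
  calc ∑ k ∈ Icc 2 N, ((k : ℝ) ^ 2)⁻¹ ≤ ∑ k ∈ Icc 2 (N + 2), ((k : ℝ) ^ 2)⁻¹ :=
        sum_le_sum_of_subset_of_nonneg (Icc_subset_Icc_right (by omega)) fun _ _ _ => by positivity
    _ ≤ 3 / 4 - ((N : ℝ) + 2)⁻¹ := telescoped N
    _ ≤ 3 / 4 := by linarith [show (0 : ℝ) ≤ ((N : ℝ) + 2)⁻¹ by positivity]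

def coprimePairs (N : ℕ) : Finset (ℕ × ℕ) :=
  (Ioc 0 N ×ˢ Ioc 0 N).filter fun p => p.1.Coprime p.2

lemma card_filter_not_coprime_le (N : ℕ) :
    #((Ioc 0 N ×ˢ Ioc 0 N).filter fun p : ℕ × ℕ => ¬ p.1.Coprime p.2) ≤
      ∑ k ∈ Icc 2 N, (N / k) ^ 2 := by
  let multiples (k : ℕ) : Finset ℕ := (Ioc 0 N).filter (k ∣ ·)
  calc _ ≤ #((Icc 2 N).biUnion fun k => multiples k ×ˢ multiples k) := by
        refine card_le_card fun p hp => ?_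
        simp only [mem_filter, mem_product, mem_Ioc] at hp
        obtain ⟨⟨⟨ha, haN⟩, hb, hbN⟩, hpq⟩ := hp
        have hg : 0 < p.1.gcd p.2 := Nat.gcd_pos_of_pos_left _ ha
        have hgN : p.1.gcd p.2 ≤ N := (Nat.gcd_le_left _ ha).trans haN
        simp only [mem_biUnion, mem_Icc, mem_product, mem_filter, mem_Ioc, multiples]
        exact ⟨p.1.gcd p.2, ⟨by unfold Nat.Coprime at hpq; omega, hgN⟩,
          ⟨⟨ha, haN⟩, Nat.gcd_dvd_left _ _⟩, ⟨hb, by omega⟩, Nat.gcd_dvd_right _ _⟩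
    _ ≤ ∑ k ∈ Icc 2 N, #(multiples k ×ˢ multiples k) := card_biUnion_le
    _ = ∑ k ∈ Icc 2 N, (N / k) ^ 2 := by
        simp only [card_product, multiples, Nat.Ioc_filter_dvd_card_eq_div, sq]

lemma sq_le_four_mul_card_coprimePairs (N : ℕ) : N ^ 2 ≤ 4 * #(coprimePairs N) := by
  have hsplit := card_filter_add_card_filter_not (s := Ioc 0 N ×ˢ Ioc 0 N)
    (p := fun p : ℕ × ℕ => p.1.Coprime p.2)
  simp only [card_product, Nat.card_Ioc, Nat.sub_zero] at hsplit
  have hbad : (4 * #((Ioc 0 N ×ˢ Ioc 0 N).filter fun p : ℕ × ℕ => ¬ p.1.Coprime p.2) : ℝ)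
      ≤ 3 * N ^ 2 := by
    have hsum : ∑ k ∈ Icc 2 N, (((N / k) ^ 2 : ℕ) : ℝ) ≤
        (N : ℝ) ^ 2 * ∑ k ∈ Icc 2 N, ((k : ℝ) ^ 2)⁻¹ := by
      rw [mul_sum]
      refine sum_le_sum fun k _ => ?_
      rw [← div_eq_mul_inv, ← div_pow]
      push_cast
      exact pow_le_pow_left₀ (by positivity) Nat.cast_div_le 2
    have := Nat.cast_le (α := ℝ) |>.mpr (card_filter_not_coprime_le N)
    push_cast at this hsum
    nlinarith [sum_Icc_two_inv_sq_le N, sq_nonneg (N : ℝ)]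
  have : 4 * #((Ioc 0 N ×ˢ Ioc 0 N).filter fun p : ℕ × ℕ => ¬ p.1.Coprime p.2) ≤ 3 * N ^ 2 := by
    exact_mod_cast hbad
  unfold coprimePairs
  nlinarith

section Line

variable {E : Type*} [AddCommGroup E] [Module ℝ E]

def line (x v : E) : Set E := {y | ∃ t : ℝ, y = x + t • v}

lemma self_mem_line (x v : E) : x ∈ line x v := ⟨0, by simp⟩

lemma add_mem_line (x v : E) : x + v ∈ line x v := ⟨1, by simp⟩

lemma exists_sub_eq_smul_of_mem_line {x v A B : E} (hA : A ∈ line x v) (hB : B ∈ line x v) :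
    ∃ t : ℝ, B - A = t • v := by
  obtain ⟨s, rfl⟩ := hA
  obtain ⟨t, rfl⟩ := hB
  exact ⟨t - s, by module⟩

lemma line_eq_line_of_mem {x v A B : E} (hA : A ∈ line x v) (hB : B ∈ line x v) (hAB : A ≠ B) :
    line x v = line A (B - A) := by
  obtain ⟨s, rfl⟩ := hA
  obtain ⟨t, rfl⟩ := hB
  have hts : t - s ≠ 0 := fun h => hAB (by rw [sub_eq_zero.mp h])
  ext P
  constructor
  · rintro ⟨u, rfl⟩
    refine ⟨(u - s) / (t - s), ?_⟩
    rw [show x + t • v - (x + s • v) = (t - s) • v by module, smul_smul, div_mul_cancel₀ _ hts]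
    module
  · rintro ⟨u, rfl⟩
    exact ⟨s + u * (t - s), by module⟩

end Line

section Lattice

variable {d : ℕ}

@[simp]
lemma ofLp_L (z : Fin d → ℤ) (i : Fin d) : (L d z).ofLp i = z i := rfl

lemma L_add (y z : Fin d → ℤ) : L d (y + z) = L d y + L d z := by
  ext i
  simp

lemma L_sub (y z : Fin d → ℤ) : L d (y - z) = L d y - L d z := by
  ext i
  simp

lemma L_injective : Function.Injective (L d) := fun y z h => by
  funext i
  simpa using congrArg (· i) h

lemma abs_le_norm_L (z : Fin d → ℤ) (i : Fin d) : |(z i : ℝ)| ≤ ‖L d z‖ := by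
  simpa using PiLp.norm_apply_le (L d z) i

lemma norm_L_le {z : Fin d → ℤ} {M : ℝ} (hM : 0 ≤ M) (hz : ∀ i, |(z i : ℝ)| ≤ M) :
    ‖L d z‖ ≤ d * M := by
  rw [EuclideanSpace.norm_eq, Real.sqrt_le_left (by positivity)]
  calc ∑ i, ‖L d z i‖ ^ 2 ≤ ∑ _i : Fin d, M ^ 2 :=
        Finset.sum_le_sum fun i _ => pow_le_pow_left₀ (norm_nonneg _) (by simpa using hz i) 2
    _ = d * M ^ 2 := by simp
    _ ≤ (d * M) ^ 2 := by
        rw [mul_pow]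
        gcongr
        exact_mod_cast Nat.le_self_pow two_ne_zero d

def IsPrimitive (z : Fin d → ℤ) : Prop := ∃ c : Fin d → ℤ, ∑ i, c i * z i = 1

lemma IsPrimitive.ne_zero {z : Fin d → ℤ} (hz : IsPrimitive z) : z ≠ 0 := by
  rintro rfl
  obtain ⟨c, hc⟩ := hz
  simp at hc

lemma IsPrimitive.exists_int_of_smul_eq {z m : Fin d → ℤ} (hz : IsPrimitive z) {t : ℝ}
    (h : t • L d z = L d m) : ∃ k : ℤ, m = k • z := by
  obtain ⟨c, hc⟩ := hz
  have hm : ∀ i, (m i : ℝ) = t * z i := fun i => by simpa using (congrArg (· i) h).symm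
  have ht : t = ((∑ i, c i * m i : ℤ) : ℝ) := by
    have hc' : ((∑ i, c i * z i : ℤ) : ℝ) = 1 := by exact_mod_cast hc
    push_cast at hc' ⊢
    simp_rw [hm, mul_left_comm _ t, ← Finset.mul_sum, hc', mul_one]
  refine ⟨∑ i, c i * m i, funext fun i => ?_⟩
  have hmi : (m i : ℝ) = ((∑ j, c j * m j : ℤ) : ℝ) * z i := ht ▸ hm i
  rw [Pi.smul_apply, smul_eq_mul]
  exact_mod_cast hmi

lemma IsPrimitive.isUnit_of_smul {z : Fin d → ℤ} {k : ℤ} (hz : IsPrimitive (k • z)) :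
    IsUnit k := by
  obtain ⟨c, hc⟩ := hz
  refine IsUnit.of_mul_eq_one (∑ i, c i * z i) ?_
  rw [← hc, Finset.mul_sum]
  exact Finset.sum_congr rfl fun i _ => by simp; ring

theorem eq_of_line_eq {y y' z z' : Fin d → ℤ} (i : Fin d) (hz : IsPrimitive z)
    (hz' : IsPrimitive z') (hzi : 0 < z i) (hz'i : 0 < z' i) (hyi : |y' i - y i| < z i)
    (h : line (L d y) (L d z) = line (L d y') (L d z')) : z = z' ∧ y = y' := by
  have hy' : L d y' ∈ line (L d y) (L d z) := h ▸ self_mem_line _ _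
  have hyz' : L d y' + L d z' ∈ line (L d y) (L d z) := h ▸ add_mem_line _ _
  obtain ⟨u, hu⟩ := exists_sub_eq_smul_of_mem_line hy' hyz'
  obtain ⟨k, rfl⟩ := hz.exists_int_of_smul_eq (m := z') (by rw [← hu]; abel)
  have hk : k = 1 := by
    rcases Int.isUnit_iff.mp hz'.isUnit_of_smul with hk | hk
    · exact hk
    · simp [hk] at hz'i
      omega
  subst hk
  obtain ⟨t, ht⟩ := exists_sub_eq_smul_of_mem_line (self_mem_line _ _) hy'
  obtain ⟨j, hj⟩ := hz.exists_int_of_smul_eq (m := y' - y) (by rw [L_sub, ht])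
  have hji : y' i - y i = j * z i := by simpa using congrFun hj i
  have hj0 : j = 0 :=
    (mul_eq_zero.mp (Int.eq_zero_of_abs_lt_dvd (dvd_mul_left _ _) (hji ▸ hyi))).resolve_right
      hzi.ne'
  refine ⟨(one_smul _ _).symm, (sub_eq_zero.mp ?_).symm⟩
  rw [hj, hj0, zero_smul]

end Lattice

section Tmin

variable {d : ℕ} {r : ℝ}

lemma line_mem_Tmin {y z : Fin d → ℤ} (hz : z ≠ 0) (hy : ‖L d y‖ ≤ r)
    (hyz : ‖L d (y + z)‖ ≤ r) : line (L d y) (L d z) ∈ Tmin d r :=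
  ⟨L d y, z, hz, rfl, y, y + z, fun h => hz (by simpa using h), self_mem_line _ _,
    L_add y z ▸ add_mem_line _ _, hy, hyz⟩

noncomputable def latticeBox (d : ℕ) (r : ℝ) : Finset (Fin d → ℤ) :=
  Fintype.piFinset fun _ => Icc (-⌊r⌋) ⌊r⌋

lemma mem_latticeBox_of_norm_le {y : Fin d → ℤ} (hy : ‖L d y‖ ≤ r) : y ∈ latticeBox d r := by
  simp only [latticeBox, Fintype.mem_piFinset, mem_Icc, ← abs_le]
  intro i
  exact Int.le_floor.mpr (by exact_mod_cast (abs_le_norm_L y i).trans hy)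

lemma Tmin_subset_image_latticeBox :
    Tmin d r ⊆ (fun q : (Fin d → ℤ) × (Fin d → ℤ) => line (L d q.1) (L d q.2 - L d q.1)) ''
      ↑(latticeBox d r ×ˢ latticeBox d r) := by
  rintro s ⟨x, z, -, rfl, y, y', hyy', hy, hy', hyr, hy'r⟩
  refine ⟨(y, y'), ?_, (line_eq_line_of_mem hy hy' (L_injective.ne hyy')).symm⟩
  simp [mem_latticeBox_of_norm_le hyr, mem_latticeBox_of_norm_le hy'r]

lemma Tmin_finite : (Tmin d r).Finite :=
  ((latticeBox d r ×ˢ latticeBox d r).finite_toSet.image _).subset Tmin_subset_image_latticeBox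

lemma ncard_Tmin_le : (Tmin d r).ncard ≤ #(latticeBox d r) ^ 2 := by
  have hfin := (latticeBox d r ×ˢ latticeBox d r).finite_toSet
  calc (Tmin d r).ncard ≤ _ := Set.ncard_le_ncard Tmin_subset_image_latticeBox (hfin.image _)
    _ ≤ _ := Set.ncard_image_le hfin
    _ = #(latticeBox d r) ^ 2 := by rw [Set.ncard_coe_finset, card_product, sq]

lemma card_latticeBox_le (hr : 1 ≤ r) : (#(latticeBox d r) : ℝ) ≤ (3 * r) ^ d := by
  have hfloor : 0 ≤ ⌊r⌋ := Int.floor_nonneg.mpr (by linarith)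
  rw [latticeBox, Fintype.card_piFinset, prod_const, Int.card_Icc, card_univ, Fintype.card_fin]
  push_cast
  gcongr
  rw [← Int.cast_natCast, Int.toNat_of_nonneg (by omega)]
  push_cast
  linarith [Int.floor_le r]

end Tmin

section LowerBound

noncomputable def cube (m n : ℕ) : Finset (Fin m → ℤ) :=
  Fintype.piFinset fun _ => Ico 0 (n : ℤ)

lemma card_cube (m n : ℕ) : #(cube m n) = n ^ m := by simp [cube]

lemma mem_cube {m n : ℕ} {y : Fin m → ℤ} : y ∈ cube m n ↔ ∀ i, 0 ≤ y i ∧ y i < n := by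
  simp [cube]

noncomputable def primitiveDirs (m n : ℕ) : Finset (Fin (m + 2) → ℤ) :=
  (((coprimePairs (5 * n)).filter fun p => n < p.1) ×ˢ cube m n).image
    fun q => Matrix.vecCons (q.1.1 : ℤ) (Matrix.vecCons (q.1.2 : ℤ) q.2)

lemma sq_le_card_filter_coprimePairs (n : ℕ) :
    n ^ 2 ≤ #((coprimePairs (5 * n)).filter fun p => n < p.1) := by
  have hsplit :=
    card_filter_add_card_filter_not (s := coprimePairs (5 * n)) (p := fun p => n < p.1)
  have hsmall : #((coprimePairs (5 * n)).filter fun p => ¬ n < p.1) ≤ n * (5 * n) := by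
    calc _ ≤ #(Ioc 0 n ×ˢ Ioc 0 (5 * n)) := card_le_card fun p hp => by
          simp only [coprimePairs, mem_filter, mem_product, mem_Ioc] at hp ⊢
          omega
      _ = n * (5 * n) := by simp
  nlinarith [sq_le_four_mul_card_coprimePairs (5 * n)]

lemma card_primitiveDirs (m n : ℕ) : n ^ (m + 2) ≤ #(primitiveDirs m n) := by
  rw [primitiveDirs, card_image_of_injective, card_product, card_cube, pow_add, mul_comm]
  · exact Nat.mul_le_mul_right _ (sq_le_card_filter_coprimePairs n)
  · rintro ⟨⟨a, b⟩, w⟩ ⟨⟨a', b'⟩, w'⟩ h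
    simp only [Matrix.vecCons_inj, Nat.cast_inj] at h
    obtain ⟨rfl, rfl, rfl⟩ := h
    rfl

lemma mem_primitiveDirs {m n : ℕ} {z : Fin (m + 2) → ℤ} (hz : z ∈ primitiveDirs m n) :
    IsPrimitive z ∧ n < z 0 ∧ ∀ i, 0 ≤ z i ∧ z i < 5 * n + 1 := by
  simp only [primitiveDirs, coprimePairs, mem_image, mem_filter, mem_product, mem_Ioc, mem_cube,
    Prod.exists] at hz
  obtain ⟨a, b, w, ⟨⟨⟨⟨⟨ha, haN⟩, hb, hbN⟩, hab⟩, hna⟩, hw⟩, rfl⟩ := hz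
  obtain ⟨u, v, huv⟩ := Nat.isCoprime_iff_coprime.mpr hab
  refine ⟨⟨Matrix.vecCons u (Matrix.vecCons v 0), ?_⟩, by simpa using hna, ?_⟩
  · simpa [Fin.sum_univ_succ] using huv
  · refine Fin.cases ?_ (Fin.cases ?_ fun i => ?_)
    all_goals simp only [Matrix.cons_val_zero, Matrix.cons_val_succ]
    · omega
    · omega
    · have := hw i
      omega

lemma line_mem_Tmin_of_mem {m n : ℕ} {r : ℝ} (hr : 6 * ((m + 2 : ℕ) : ℝ) * n ≤ r)
    {z y : Fin (m + 2) → ℤ} (hz : z ∈ primitiveDirs m n) (hy : y ∈ cube (m + 2) n) :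
    line (L _ y) (L _ z) ∈ Tmin (m + 2) r := by
  have hnorm {x : Fin (m + 2) → ℤ} (hx : ∀ i, 0 ≤ x i ∧ x i < 6 * n) : ‖L _ x‖ ≤ r := by
    refine (norm_L_le (M := 6 * n) (by positivity) fun i => ?_).trans (by linarith)
    have := hx i
    rw [abs_le]
    constructor <;> norm_cast <;> omega
  obtain ⟨hprim, -, hzb⟩ := mem_primitiveDirs hz
  refine line_mem_Tmin hprim.ne_zero (hnorm fun i => ?_) (hnorm fun i => ?_)
  all_goals have := mem_cube.mp hy i
  · omega
  · have := hzb i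
    simp only [Pi.add_apply]
    omega

lemma injOn_line_primitiveDirs_cube (m n : ℕ) :
    Set.InjOn (fun q : (Fin (m + 2) → ℤ) × (Fin (m + 2) → ℤ) => line (L _ q.2) (L _ q.1))
      ↑(primitiveDirs m n ×ˢ cube (m + 2) n) := by
  rintro ⟨z, y⟩ hq ⟨z', y'⟩ hq' h
  simp only [coe_product, Set.mem_prod, mem_coe, mem_cube] at hq hq' h
  obtain ⟨hprim, hz0, -⟩ := mem_primitiveDirs hq.1
  obtain ⟨hprim', hz0', -⟩ := mem_primitiveDirs hq'.1
  have hy0 := hq.2 0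
  have hy0' := hq'.2 0
  obtain ⟨rfl, rfl⟩ := eq_of_line_eq 0 hprim hprim' (by omega) (by omega)
    (by rw [abs_lt]; omega) h
  rfl

theorem pow_le_ncard_Tmin {d : ℕ} (hd : 2 ≤ d) (n : ℕ) {r : ℝ} (hr : 6 * d * n ≤ r) :
    n ^ (2 * d) ≤ (Tmin d r).ncard := by
  obtain ⟨m, rfl⟩ := Nat.exists_eq_add_of_le' hd
  calc n ^ (2 * (m + 2)) ≤ #(primitiveDirs m n ×ˢ cube (m + 2) n) := by
        rw [card_product, card_cube, two_mul, pow_add]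
        exact Nat.mul_le_mul_right _ (card_primitiveDirs m n)
    _ = _ := (Set.ncard_coe_finset _).symm
    _ ≤ (Tmin (m + 2) r).ncard :=
        Set.ncard_le_ncard_of_injOn _ (fun q hq => line_mem_Tmin_of_mem hr
          (mem_product.mp hq).1 (mem_product.mp hq).2) (injOn_line_primitiveDirs_cube m n)
          Tmin_finite

end LowerBound

theorem div_pow_le_ncard_Tmin {d : ℕ} (hd : 2 ≤ d) {r : ℝ} (hr : 6 * d ≤ r) :
    (r / (12 * d)) ^ (2 * d) ≤ (Tmin d r).ncard := by
  have hd6 : (0 : ℝ) < 6 * d := by positivity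
  set n := ⌊r / (6 * d)⌋₊
  have hn : 6 * d * n ≤ r := by
    have := Nat.floor_le (div_nonneg (hd6.le.trans hr) hd6.le)
    rwa [le_div_iff₀ hd6, mul_comm] at this
  have hn_ge : r / (12 * d) ≤ n := by
    have hlt := Nat.lt_floor_add_one (r / (6 * d))
    have hone : (1 : ℝ) ≤ n := by
      exact_mod_cast Nat.le_floor (by simpa using (one_le_div hd6).mpr hr)
    rw [show r / (12 * d) = r / (6 * d) / 2 by rw [div_div]; ring_nf]
    linarith
  calc (r / (12 * d)) ^ (2 * d) ≤ (n : ℝ) ^ (2 * d) :=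
        pow_le_pow_left₀ (div_nonneg (by linarith) (by positivity)) hn_ge _
    _ ≤ (Tmin d r).ncard := by exact_mod_cast pow_le_ncard_Tmin hd n hn

theorem stmt14 (d : ℕ) (hd : 2 ≤ d) :
    ∃ C₁ C₂ : ℝ, 0 < C₁ ∧ 0 < C₂ ∧ ∃ R : ℝ, ∀ r : ℝ, R ≤ r →
      C₁ * r ^ (2 * d) < ((Tmin d r).ncard : ℝ) ∧
      ((Tmin d r).ncard : ℝ) < C₂ * r ^ (2 * d) := by
  have hd2 : (2 : ℝ) ≤ d := by exact_mod_cast hd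
  have hd0 : (0 : ℝ) < d := by linarith
  have hc : (0 : ℝ) < (12 * (d : ℝ))⁻¹ ^ (2 * d) := by positivity
  refine ⟨(12 * (d : ℝ))⁻¹ ^ (2 * d) / 2, 2 * 3 ^ (2 * d), by positivity, by positivity, 6 * d,
    fun r hr => ⟨?_, ?_⟩⟩
  all_goals have hpow : (0 : ℝ) < r ^ (2 * d) := pow_pos (by linarith) _
  · calc (12 * (d : ℝ))⁻¹ ^ (2 * d) / 2 * r ^ (2 * d)
          < (12 * (d : ℝ))⁻¹ ^ (2 * d) * r ^ (2 * d) := by nlinarith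
      _ = (r / (12 * d)) ^ (2 * d) := by rw [div_eq_inv_mul, mul_pow]
      _ ≤ _ := div_pow_le_ncard_Tmin hd hr
  · calc ((Tmin d r).ncard : ℝ) ≤ (#(latticeBox d r) : ℝ) ^ 2 := by exact_mod_cast ncard_Tmin_le
      _ ≤ ((3 * r) ^ d) ^ 2 := by gcongr; exact card_latticeBox_le (by linarith)
      _ = 3 ^ (2 * d) * r ^ (2 * d) := by ring
      _ < 2 * 3 ^ (2 * d) * r ^ (2 * d) := by nlinarith [pow_pos (three_pos (α := ℝ)) (2 * d)]
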